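/- arXiv:math/0511535 — 4 statements merged into one kernel-verified Lean document; each statement's English description precedes it below -/
import Mathlib

section
/- Let H be a finite-dimensional Hopf algebra over a field k. Let t ∈ H be a nonzero left integral (h·t = ε(h)·t for all h ∈ H), and let Λ : H → k be a linear functional satisfying Λ(t₁)·t₂ = 1. Then Λ is a right integral for H in H⁎, i.e. Λ(h₁)·h₂ = Λ(h)·1 for all h ∈ H. -/
/-!
Helper definitions for Sweedler-notation expressions in a Hopf algebra `H` over a field `k`.
-/

open TensorProduct

variable {k H : Type*} [Field k] [Ring H] [HopfAlgebra k H]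

/-- `swl f h = f(h₁) • h₂` in Sweedler notation. -/
noncomputable def swl (f : H →ₗ[k] k) : H →ₗ[k] H :=
  (TensorProduct.lid k H).toLinearMap ∘ₗ (f.rTensor H) ∘ₗ Coalgebra.comul

/-- `swr f h = f(h₂) • h₁` in Sweedler notation. -/
noncomputable def swr (f : H →ₗ[k] k) : H →ₗ[k] H :=
  (TensorProduct.rid k H).toLinearMap ∘ₗ (f.lTensor H) ∘ₗ Coalgebra.comul

/-- `sw2 f g h = f(h₁) * g(h₂)`, an element of `H`, in Sweedler notation. -/
noncomputable def sw2 (f g : H →ₗ[k] H) : H →ₗ[k] H :=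
  (LinearMap.mul' k H) ∘ₗ (TensorProduct.map f g) ∘ₗ Coalgebra.comul

/-- `sw2k f g h = f(h₁) * g(h₂)`, a scalar, in Sweedler notation. -/
noncomputable def sw2k (f g : H →ₗ[k] k) : H →ₗ[k] k :=
  (LinearMap.mul' k k) ∘ₗ (TensorProduct.map f g) ∘ₗ Coalgebra.comul

/-- `comul3 h = (h₁ ⊗ h₂) ⊗ h₃`, the iterated comultiplication `(Δ ⊗ id)Δ`. -/
noncomputable def comul3 : H →ₗ[k] (H ⊗[k] H) ⊗[k] H :=
  (LinearMap.rTensor H Coalgebra.comul) ∘ₗ Coalgebra.comul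

/-- `sw3 f g e h = f(h₁) * g(h₂) * e(h₃)`, an element of `H`, in Sweedler notation. -/
noncomputable def sw3 (f g e : H →ₗ[k] H) : H →ₗ[k] H :=
  (LinearMap.mul' k H) ∘ₗ
    (TensorProduct.map ((LinearMap.mul' k H) ∘ₗ TensorProduct.map f g) e) ∘ₗ comul3

namespace Stmt0Aux

open Coalgebra LinearMap

/-- convolution of two linear maps from `H` to an algebra `A`. -/
noncomputable def conv {A : Type*} [Ring A] [Algebra k A] (f g : H →ₗ[k] A) : H →ₗ[k] A :=
  LinearMap.mul' k A ∘ₗ TensorProduct.map f g ∘ₗ Coalgebra.comul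

/-- the convolution unit `η ∘ ε`. -/
noncomputable def cunit (A : Type*) [Ring A] [Algebra k A] : H →ₗ[k] A :=
  Algebra.linearMap k A ∘ₗ Coalgebra.counit

variable {A : Type*} [Ring A] [Algebra k A]

lemma conv_apply (f g : H →ₗ[k] A) (h : H) :
    conv f g h = LinearMap.mul' k A (TensorProduct.map f g (Coalgebra.comul h)) := rfl

lemma cunit_apply (h : H) :
    cunit (k := k) (H := H) A h = algebraMap k A (Coalgebra.counit h) := rfl

lemma conv_unit_left (f : H →ₗ[k] A) : conv (cunit A) f = f := by
  ext h
  have key : ∀ u : H ⊗[k] H,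
      LinearMap.mul' k A (TensorProduct.map (cunit A) f u)
      = LinearMap.mul' k A (TensorProduct.map (Algebra.linearMap k A) f
          ((Coalgebra.counit (R := k) (A := H)).rTensor H u)) := by
    intro u
    induction u using TensorProduct.induction_on with
    | zero => simp
    | tmul a b => simp [cunit_apply]
    | add x y hx hy => simp only [map_add, hx, hy]
  have h2 := key (Coalgebra.comul h)
  rw [Coalgebra.rTensor_counit_comul] at h2
  simpa [conv_apply] using h2

lemma conv_unit_right (f : H →ₗ[k] A) : conv f (cunit A) = f := by
  ext h
  have key : ∀ u : H ⊗[k] H,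
      LinearMap.mul' k A (TensorProduct.map f (cunit A) u)
      = LinearMap.mul' k A (TensorProduct.map f (Algebra.linearMap k A)
          ((Coalgebra.counit (R := k) (A := H)).lTensor H u)) := by
    intro u
    induction u using TensorProduct.induction_on with
    | zero => simp
    | tmul a b => simp [cunit_apply]
    | add x y hx hy => simp only [map_add, hx, hy]
  have h2 := key (Coalgebra.comul h)
  rw [Coalgebra.lTensor_counit_comul] at h2
  simpa [conv_apply] using h2

lemma conv_assoc (f g e : H →ₗ[k] A) : conv (conv f g) e = conv f (conv g e) := by
  have hL : LinearMap.mul' k A ∘ₗ TensorProduct.map (conv f g) e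
      = (LinearMap.mul' k A ∘ₗ TensorProduct.map (LinearMap.mul' k A ∘ₗ TensorProduct.map f g) e)
        ∘ₗ (Coalgebra.comul (R := k) (A := H)).rTensor H := by
    apply TensorProduct.ext'
    intro a b
    simp [conv_apply]
  have hR : LinearMap.mul' k A ∘ₗ TensorProduct.map f (conv g e)
      = (LinearMap.mul' k A ∘ₗ TensorProduct.map f (LinearMap.mul' k A ∘ₗ TensorProduct.map g e))
        ∘ₗ (Coalgebra.comul (R := k) (A := H)).lTensor H := by
    apply TensorProduct.ext'
    intro a b
    simp [conv_apply]
  have hM : (LinearMap.mul' k A ∘ₗ TensorProduct.map (LinearMap.mul' k A ∘ₗ TensorProduct.map f g) e)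
      = (LinearMap.mul' k A ∘ₗ TensorProduct.map f (LinearMap.mul' k A ∘ₗ TensorProduct.map g e))
        ∘ₗ (TensorProduct.assoc k H H H).toLinearMap := by
    apply TensorProduct.ext_threefold
    intro a b c
    simp [mul_assoc]
  calc conv (conv f g) e
      = (LinearMap.mul' k A ∘ₗ TensorProduct.map (conv f g) e) ∘ₗ Coalgebra.comul := rfl
    _ = (LinearMap.mul' k A ∘ₗ TensorProduct.map f (LinearMap.mul' k A ∘ₗ TensorProduct.map g e))
        ∘ₗ ((TensorProduct.assoc k H H H).toLinearMap ∘ₗ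
            (Coalgebra.comul (R := k) (A := H)).rTensor H ∘ₗ Coalgebra.comul) := by
        rw [hL, hM]; rfl
    _ = (LinearMap.mul' k A ∘ₗ TensorProduct.map f (LinearMap.mul' k A ∘ₗ TensorProduct.map g e))
        ∘ₗ ((Coalgebra.comul (R := k) (A := H)).lTensor H ∘ₗ Coalgebra.comul) := by
        rw [Coalgebra.coassoc]
    _ = conv f (conv g e) := by
        rw [← LinearMap.comp_assoc, ← hR]; rfl



/-- the antipode as a linear map -/
noncomputable def Sa : H →ₗ[k] H := HopfAlgebra.antipode (R := k)

lemma conv_id_antipode : conv (LinearMap.id : H →ₗ[k] H) Sa = cunit H :=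
  HopfAlgebra.mul_antipode_lTensor_comul

lemma conv_antipode_id : conv (Sa : H →ₗ[k] H) LinearMap.id = cunit H :=
  HopfAlgebra.mul_antipode_rTensor_comul

lemma comul_comp_algebraMap :
    (Coalgebra.comul (R := k) (A := H)) ∘ₗ Algebra.linearMap k H = Algebra.linearMap k (H ⊗[k] H) := by
  ext c
  simp [Algebra.TensorProduct.one_def]

lemma Sa_rT : LinearMap.mul' k H ∘ₗ (Sa : H →ₗ[k] H).rTensor H ∘ₗ Coalgebra.comul
    = Algebra.linearMap k H ∘ₗ Coalgebra.counit :=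
  HopfAlgebra.mul_antipode_rTensor_comul

lemma Sa_lT : LinearMap.mul' k H ∘ₗ (Sa : H →ₗ[k] H).lTensor H ∘ₗ Coalgebra.comul
    = Algebra.linearMap k H ∘ₗ Coalgebra.counit :=
  HopfAlgebra.mul_antipode_lTensor_comul

lemma step1 : conv (Coalgebra.comul ∘ₗ (Sa : H →ₗ[k] H)) (Coalgebra.comul (R := k) (A := H))
    = cunit (H ⊗[k] H) := by
  have h1 : LinearMap.mul' k (H ⊗[k] H) ∘ₗ TensorProduct.map (Coalgebra.comul ∘ₗ Sa) Coalgebra.comul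
      = Coalgebra.comul ∘ₗ LinearMap.mul' k H ∘ₗ (Sa : H →ₗ[k] H).rTensor H := by
    apply TensorProduct.ext'
    intro a b
    simp [Bialgebra.comul_mul]
  calc conv (Coalgebra.comul ∘ₗ (Sa : H →ₗ[k] H)) Coalgebra.comul
      = (LinearMap.mul' k (H ⊗[k] H) ∘ₗ
          TensorProduct.map (Coalgebra.comul ∘ₗ Sa) Coalgebra.comul) ∘ₗ Coalgebra.comul := rfl
    _ = Coalgebra.comul ∘ₗ (LinearMap.mul' k H ∘ₗ (Sa : H →ₗ[k] H).rTensor H ∘ₗ Coalgebra.comul) := by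
        rw [h1]; rfl
    _ = Coalgebra.comul ∘ₗ (Algebra.linearMap k H ∘ₗ Coalgebra.counit) := by
        rw [Sa_rT]
    _ = cunit (H ⊗[k] H) := by
        rw [cunit, ← LinearMap.comp_assoc, comul_comp_algebraMap]

/-- `τ ∘ (S ⊗ S) ∘ Δ`. -/
noncomputable def wmap : H →ₗ[k] H ⊗[k] H :=
  (TensorProduct.comm k H H).toLinearMap ∘ₗ TensorProduct.map Sa Sa ∘ₗ Coalgebra.comul

noncomputable def N2 : (H ⊗[k] H) ⊗[k] (H ⊗[k] H) →ₗ[k] H ⊗[k] H :=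
  LinearMap.mul' k (H ⊗[k] H) ∘ₗ
    LinearMap.lTensor (H ⊗[k] H) ((TensorProduct.comm k H H).toLinearMap ∘ₗ TensorProduct.map Sa Sa)

noncomputable def N3 : (H ⊗[k] H) ⊗[k] H →ₗ[k] H ⊗[k] H :=
  LinearMap.mul' k (H ⊗[k] H) ∘ₗ
    LinearMap.lTensor (H ⊗[k] H) ((TensorProduct.mk k H H 1) ∘ₗ Sa)

noncomputable def Gam : H ⊗[k] H →ₗ[k] H ⊗[k] H :=
  N3 ∘ₗ (Coalgebra.comul (R := k) (A := H)).rTensor H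

noncomputable def Kmap : H →ₗ[k] H ⊗[k] H := (TensorProduct.mk k H H).flip 1

noncomputable def Lmap : H →ₗ[k] H ⊗[k] H := Kmap ∘ₗ Sa

lemma w1 : LinearMap.mul' k (H ⊗[k] H) ∘ₗ TensorProduct.map (Coalgebra.comul (R := k)) wmap
    = N2 ∘ₗ TensorProduct.map (Coalgebra.comul (R := k) (A := H)) Coalgebra.comul := by
  apply TensorProduct.ext'
  intro a b
  simp [N2, wmap]

lemma w2 : TensorProduct.map (Coalgebra.comul (R := k) (A := H)) (Coalgebra.comul (R := k) (A := H))
    = (Coalgebra.comul (R := k) (A := H)).rTensor (H ⊗[k] H) ∘ₗ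
      (Coalgebra.comul (R := k) (A := H)).lTensor H := by
  apply TensorProduct.ext'
  intro a b
  simp

lemma w3 : N2 ∘ₗ (Coalgebra.comul (R := k) (A := H)).rTensor (H ⊗[k] H) ∘ₗ
      (TensorProduct.assoc k H H H).toLinearMap
    = LinearMap.mul' k (H ⊗[k] H) ∘ₗ TensorProduct.map Gam Lmap := by
  apply TensorProduct.ext_threefold
  intro a b c
  have key : ∀ u : H ⊗[k] H, N2 (u ⊗ₜ (b ⊗ₜ[k] c))
      = LinearMap.mul' k (H ⊗[k] H) ((N3 (u ⊗ₜ b)) ⊗ₜ (Lmap c)) := by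
    intro u
    induction u using TensorProduct.induction_on with
    | zero => simp
    | tmul x y =>
        simp [N2, N3, Lmap, Kmap, Algebra.TensorProduct.tmul_mul_tmul]
    | add x y hx hy =>
        simp only [TensorProduct.add_tmul, map_add, hx, hy]
  simp only [LinearMap.comp_apply, LinearEquiv.coe_coe, TensorProduct.assoc_tmul,
    LinearMap.rTensor_tmul, TensorProduct.map_tmul, Gam]
  exact key (Coalgebra.comul a)

lemma I1 : N3 ∘ₗ (TensorProduct.assoc k H H H).symm.toLinearMap
    = LinearMap.lTensor H (LinearMap.mul' k H ∘ₗ (Sa : H →ₗ[k] H).lTensor H) := by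
  apply TensorProduct.ext'
  intro a v
  induction v using TensorProduct.induction_on with
  | zero => simp only [TensorProduct.tmul_zero, map_zero]
  | tmul x y =>
      simp [N3, Kmap, Algebra.TensorProduct.tmul_mul_tmul]
  | add x y hx hy =>
      simp only [TensorProduct.tmul_add, map_add, hx, hy]

lemma w4 : Gam ∘ₗ (Coalgebra.comul (R := k) (A := H)) = Kmap := by
  have h1 : Gam ∘ₗ (Coalgebra.comul (R := k) (A := H))
      = (N3 ∘ₗ (TensorProduct.assoc k H H H).symm.toLinearMap) ∘ₗ
        (Coalgebra.comul (R := k) (A := H)).lTensor H ∘ₗ Coalgebra.comul := by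
    ext h
    simp only [Gam, LinearMap.comp_apply, LinearEquiv.coe_coe]
    rw [← Coalgebra.coassoc_symm_apply]
  rw [h1, I1]
  have h2 : (LinearMap.lTensor H (LinearMap.mul' k H ∘ₗ (Sa : H →ₗ[k] H).lTensor H)) ∘ₗ
        (Coalgebra.comul (R := k) (A := H)).lTensor H ∘ₗ Coalgebra.comul
      = LinearMap.lTensor H (Algebra.linearMap k H) ∘ₗ
        (Coalgebra.counit (R := k) (A := H)).lTensor H ∘ₗ Coalgebra.comul := by
    rw [← LinearMap.comp_assoc, ← LinearMap.lTensor_comp, LinearMap.comp_assoc, Sa_lT,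
      ← LinearMap.comp_assoc, ← LinearMap.lTensor_comp]
  rw [h2, Coalgebra.lTensor_counit_comp_comul]
  ext h
  simp [Kmap]

lemma w5 : LinearMap.mul' k (H ⊗[k] H) ∘ₗ TensorProduct.map Kmap Lmap
    = Kmap ∘ₗ LinearMap.mul' k H ∘ₗ (Sa : H →ₗ[k] H).lTensor H := by
  apply TensorProduct.ext'
  intro a b
  simp [Kmap, Lmap, Algebra.TensorProduct.tmul_mul_tmul]

lemma w6 : Kmap ∘ₗ Algebra.linearMap k H = Algebra.linearMap k (H ⊗[k] H) := by
  ext c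
  simp [Kmap, Algebra.TensorProduct.one_def]

lemma hmap_gam : TensorProduct.map Gam Lmap ∘ₗ (Coalgebra.comul (R := k) (A := H)).rTensor H
    = TensorProduct.map Kmap Lmap := by
  rw [show (Coalgebra.comul (R := k) (A := H)).rTensor H
      = TensorProduct.map Coalgebra.comul LinearMap.id from rfl,
    ← TensorProduct.map_comp, LinearMap.comp_id, w4]

lemma step3 : conv (Coalgebra.comul (R := k) (A := H)) wmap = cunit (H ⊗[k] H) := by
  ext h
  calc conv (Coalgebra.comul (R := k) (A := H)) wmap h
      = LinearMap.mul' k (H ⊗[k] H)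
          (TensorProduct.map Coalgebra.comul wmap (Coalgebra.comul h)) := rfl
    _ = N2 (TensorProduct.map Coalgebra.comul Coalgebra.comul (Coalgebra.comul h)) := by
        exact congr_fun (congrArg DFunLike.coe w1) (Coalgebra.comul h)
    _ = N2 ((Coalgebra.comul (R := k) (A := H)).rTensor (H ⊗[k] H)
          ((Coalgebra.comul (R := k) (A := H)).lTensor H (Coalgebra.comul h))) := by rw [w2]; rfl
    _ = N2 ((Coalgebra.comul (R := k) (A := H)).rTensor (H ⊗[k] H)
          ((TensorProduct.assoc k H H H)
            ((Coalgebra.comul (R := k) (A := H)).rTensor H (Coalgebra.comul h)))) := by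
        rw [Coalgebra.coassoc_apply]
    _ = (N2 ∘ₗ (Coalgebra.comul (R := k) (A := H)).rTensor (H ⊗[k] H) ∘ₗ
          (TensorProduct.assoc k H H H).toLinearMap)
          ((Coalgebra.comul (R := k) (A := H)).rTensor H (Coalgebra.comul h)) := rfl
    _ = LinearMap.mul' k (H ⊗[k] H) ((TensorProduct.map Gam Lmap)
          ((Coalgebra.comul (R := k) (A := H)).rTensor H (Coalgebra.comul h))) := by rw [w3]; rfl
    _ = LinearMap.mul' k (H ⊗[k] H) ((TensorProduct.map Kmap Lmap) (Coalgebra.comul h)) := by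
        exact congrArg _ (LinearMap.congr_fun hmap_gam (Coalgebra.comul h))
    _ = Kmap (LinearMap.mul' k H ((Sa : H →ₗ[k] H).lTensor H (Coalgebra.comul h))) := by
        exact LinearMap.congr_fun w5 (Coalgebra.comul h)
    _ = Kmap (Algebra.linearMap k H (Coalgebra.counit h)) := by
        exact congrArg Kmap (LinearMap.congr_fun Sa_lT h)
    _ = cunit (H ⊗[k] H) h := by
        have := LinearMap.congr_fun (w6 (k := k) (H := H)) (Coalgebra.counit (R := k) (A := H) h)
        simpa [cunit] using this

lemma comul_antipode : Coalgebra.comul ∘ₗ (Sa : H →ₗ[k] H) = wmap := by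
  calc Coalgebra.comul ∘ₗ (Sa : H →ₗ[k] H)
      = conv (Coalgebra.comul ∘ₗ (Sa : H →ₗ[k] H)) (cunit (H ⊗[k] H)) :=
        (conv_unit_right _).symm
    _ = conv (Coalgebra.comul ∘ₗ (Sa : H →ₗ[k] H)) (conv Coalgebra.comul wmap) := by rw [step3]
    _ = conv (conv (Coalgebra.comul ∘ₗ (Sa : H →ₗ[k] H)) Coalgebra.comul) wmap :=
        (conv_assoc _ _ _).symm
    _ = conv (cunit (H ⊗[k] H)) wmap := by rw [step1]
    _ = wmap := conv_unit_left _

lemma comul_antipode_apply (h : H) :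
    Coalgebra.comul ((Sa : H →ₗ[k] H) h) = (TensorProduct.comm k H H)
      (TensorProduct.map (Sa : H →ₗ[k] H) Sa (Coalgebra.comul h)) :=
  LinearMap.congr_fun (comul_antipode (k := k) (H := H)) h

lemma cunit_k_eq : cunit (k := k) (H := H) k = (Coalgebra.counit (R := k) (A := H)) := by
  ext h
  simp [cunit_apply]

lemma counit_antipode : (Coalgebra.counit (R := k)) ∘ₗ (Sa : H →ₗ[k] H)
    = (Coalgebra.counit (R := k) (A := H)) := by
  have e2 : conv ((Coalgebra.counit (R := k)) ∘ₗ (Sa : H →ₗ[k] H)) Coalgebra.counit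
      = (Coalgebra.counit (R := k)) ∘ₗ (Sa : H →ₗ[k] H) := by
    rw [← cunit_k_eq]; exact conv_unit_right _
  have h1 : LinearMap.mul' k k ∘ₗ
        TensorProduct.map ((Coalgebra.counit (R := k)) ∘ₗ (Sa : H →ₗ[k] H)) Coalgebra.counit
      = Coalgebra.counit ∘ₗ LinearMap.mul' k H ∘ₗ (Sa : H →ₗ[k] H).rTensor H := by
    apply TensorProduct.ext'
    intro a b
    simp [← Bialgebra.counit_mul]
  have e3 : conv ((Coalgebra.counit (R := k)) ∘ₗ (Sa : H →ₗ[k] H)) Coalgebra.counit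
      = (Coalgebra.counit (R := k) (A := H)) := by
    calc conv ((Coalgebra.counit (R := k)) ∘ₗ (Sa : H →ₗ[k] H)) Coalgebra.counit
        = (LinearMap.mul' k k ∘ₗ
            TensorProduct.map ((Coalgebra.counit (R := k)) ∘ₗ Sa) Coalgebra.counit) ∘ₗ
            Coalgebra.comul := rfl
      _ = Coalgebra.counit ∘ₗ (LinearMap.mul' k H ∘ₗ (Sa : H →ₗ[k] H).rTensor H ∘ₗ
            Coalgebra.comul) := by rw [h1]; rfl
      _ = Coalgebra.counit ∘ₗ (Algebra.linearMap k H ∘ₗ Coalgebra.counit) := by rw [Sa_rT]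
      _ = (Coalgebra.counit (R := k) (A := H)) := by ext h; simp
  rw [← e2, e3]

lemma counit_antipode_apply (h : H) :
    Coalgebra.counit (R := k) ((Sa : H →ₗ[k] H) h) = Coalgebra.counit (R := k) h :=
  LinearMap.congr_fun (counit_antipode (k := k) (H := H)) h

section Integral

variable (t : H) (Λ : H →ₗ[k] k)

/-- `Om t Λ u = (Λ ⊗ id)(u * Δt)` (then `lid`). -/
noncomputable def Om : H ⊗[k] H →ₗ[k] H :=
  (TensorProduct.lid k H).toLinearMap ∘ₗ Λ.rTensor H ∘ₗ
    LinearMap.mulRight k (Coalgebra.comul t)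

lemma Om_apply (u : H ⊗[k] H) :
    Om t Λ u = TensorProduct.lid k H (Λ.rTensor H (u * Coalgebra.comul t)) := rfl

lemma mul_Om (x y b : H) : x * Om t Λ (y ⊗ₜ[k] b) = Om t Λ (y ⊗ₜ[k] (x * b)) := by
  have key : ∀ w : H ⊗[k] H,
      x * TensorProduct.lid k H (Λ.rTensor H ((y ⊗ₜ[k] b) * w))
      = TensorProduct.lid k H (Λ.rTensor H ((y ⊗ₜ[k] (x * b)) * w)) := by
    intro w
    induction w using TensorProduct.induction_on with
    | zero => simp
    | tmul c d =>
        simp [Algebra.TensorProduct.tmul_mul_tmul, mul_smul_comm, mul_assoc]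
    | add u v hu hv => simp only [mul_add, map_add, hu, hv]
  exact key (Coalgebra.comul t)

/-- `Pm h = Λ(S(h)·t₁) • t₂`. -/
noncomputable def Pm : H →ₗ[k] H := Om t Λ ∘ₗ Kmap ∘ₗ Sa

lemma swl_mul_t (h : H) : swl Λ (h * t) = Om t Λ (Coalgebra.comul h) := by
  show TensorProduct.lid k H (Λ.rTensor H (Coalgebra.comul (h * t))) = _
  rw [Bialgebra.comul_mul]
  rfl

lemma key_conv (htl : ∀ h : H, h * t = Coalgebra.counit (R := k) h • t)
    (hΛ : swl Λ t = 1) : conv Sa (Pm t Λ) = cunit H := by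
  ext h
  have step : ∀ u : H ⊗[k] H,
      LinearMap.mul' k H (TensorProduct.map (Sa : H →ₗ[k] H) (Pm t Λ) u)
      = Om t Λ ((TensorProduct.comm k H H) (TensorProduct.map (Sa : H →ₗ[k] H) Sa u)) := by
    intro u
    induction u using TensorProduct.induction_on with
    | zero => simp
    | tmul a b =>
        have : (Sa : H →ₗ[k] H) a * Om t Λ ((Sa : H →ₗ[k] H) b ⊗ₜ[k] 1)
            = Om t Λ ((Sa : H →ₗ[k] H) b ⊗ₜ[k] (Sa a * 1)) := mul_Om t Λ _ _ _
        simpa [Pm, Kmap, mul_one] using this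
    | add u v hu hv => simp only [map_add, hu, hv]
  calc conv Sa (Pm t Λ) h
      = LinearMap.mul' k H (TensorProduct.map (Sa : H →ₗ[k] H) (Pm t Λ)
          (Coalgebra.comul h)) := rfl
    _ = Om t Λ ((TensorProduct.comm k H H) (TensorProduct.map (Sa : H →ₗ[k] H) Sa
          (Coalgebra.comul h))) := step _
    _ = Om t Λ (Coalgebra.comul ((Sa : H →ₗ[k] H) h)) := by rw [← comul_antipode_apply]
    _ = swl Λ ((Sa : H →ₗ[k] H) h * t) := (swl_mul_t t Λ _).symm
    _ = cunit H h := by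
        rw [htl ((Sa : H →ₗ[k] H) h), map_smul, hΛ, counit_antipode_apply,
          cunit_apply, Algebra.algebraMap_eq_smul_one]

lemma Pm_eq_id (htl : ∀ h : H, h * t = Coalgebra.counit (R := k) h • t)
    (hΛ : swl Λ t = 1) : Pm t Λ = LinearMap.id := by
  calc Pm t Λ = conv (cunit H) (Pm t Λ) := (conv_unit_left _).symm
    _ = conv (conv LinearMap.id Sa) (Pm t Λ) := by rw [conv_id_antipode]
    _ = conv LinearMap.id (conv Sa (Pm t Λ)) := conv_assoc _ _ _
    _ = conv LinearMap.id (cunit H) := by rw [key_conv t Λ htl hΛ]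
    _ = LinearMap.id := conv_unit_right _

lemma surj_pt (htl : ∀ h : H, h * t = Coalgebra.counit (R := k) h • t)
    (hΛ : swl Λ t = 1) (h : H) :
    swl (Λ ∘ₗ LinearMap.mulLeft k ((Sa : H →ₗ[k] H) h)) t = h := by
  have e1 : swl (Λ ∘ₗ LinearMap.mulLeft k ((Sa : H →ₗ[k] H) h)) t = Pm t Λ h := by
    show TensorProduct.lid k H
        ((Λ ∘ₗ LinearMap.mulLeft k ((Sa : H →ₗ[k] H) h)).rTensor H (Coalgebra.comul t))
      = Om t Λ ((Sa : H →ₗ[k] H) h ⊗ₜ[k] 1)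
    have key : ∀ w : H ⊗[k] H,
        TensorProduct.lid k H ((Λ ∘ₗ LinearMap.mulLeft k ((Sa : H →ₗ[k] H) h)).rTensor H w)
        = TensorProduct.lid k H (Λ.rTensor H (((Sa : H →ₗ[k] H) h ⊗ₜ[k] (1 : H)) * w)) := by
      intro w
      induction w using TensorProduct.induction_on with
      | zero => simp
      | tmul c d => simp [Algebra.TensorProduct.tmul_mul_tmul]
      | add u v hu hv => simp only [map_add, mul_add, hu, hv]
    exact key (Coalgebra.comul t)
  rw [e1, Pm_eq_id t Λ htl hΛ]
  rfl

set_option synthInstance.maxHeartbeats 400000 in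
lemma swl_rT_comul (hΛ : swl Λ t = 1) :
    (swl Λ).rTensor H (Coalgebra.comul t) = (1 : H) ⊗ₜ[k] (1 : H) := by
  have expand : (swl Λ).rTensor H (Coalgebra.comul t)
      = (TensorProduct.lid k H).toLinearMap.rTensor H ((Λ.rTensor H).rTensor H
          ((Coalgebra.comul (R := k) (A := H)).rTensor H (Coalgebra.comul t))) := by
    rw [swl, LinearMap.rTensor_comp, LinearMap.rTensor_comp]
    rfl
  rw [expand, ← Coalgebra.coassoc_symm_apply]
  have key : ∀ u : H ⊗[k] H,
      (TensorProduct.lid k H).toLinearMap.rTensor H ((Λ.rTensor H).rTensor H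
        ((TensorProduct.assoc k H H H).symm
          ((Coalgebra.comul (R := k) (A := H)).lTensor H u)))
      = Coalgebra.comul (TensorProduct.lid k H (Λ.rTensor H u)) := by
    intro u
    induction u using TensorProduct.induction_on with
    | zero => simp
    | tmul a b =>
        have inner : ∀ v : H ⊗[k] H,
            (TensorProduct.lid k H).toLinearMap.rTensor H ((Λ.rTensor H).rTensor H
              ((TensorProduct.assoc k H H H).symm (a ⊗ₜ[k] v)))
            = Λ a • v := by
          intro v
          induction v using TensorProduct.induction_on with
          | zero => simp
          | tmul x y => simp [TensorProduct.smul_tmul']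
          | add u₁ u₂ h₁ h₂ => simp only [TensorProduct.tmul_add, map_add, h₁, h₂, smul_add]
        simp only [LinearMap.lTensor_tmul, inner (Coalgebra.comul b), LinearMap.rTensor_tmul,
          TensorProduct.lid_tmul, map_smul]
    | add u v hu hv => simp only [map_add, hu, hv]
  rw [key (Coalgebra.comul t)]
  have : TensorProduct.lid k H (Λ.rTensor H (Coalgebra.comul t)) = swl Λ t := rfl
  rw [this, hΛ, Bialgebra.comul_one, Algebra.TensorProduct.one_def]

/-- `Phi f = f(t₁) • t₂` as a linear map on the dual. -/
noncomputable def Phi : Module.Dual k H →ₗ[k] H where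
  toFun f := swl f t
  map_add' f g := by
    simp [swl, LinearMap.rTensor_add]
  map_smul' c f := by
    simp [swl, LinearMap.rTensor_smul]

end Integral

end Stmt0Aux

/-- Let `H` be a finite-dimensional Hopf algebra over a field `k`,
`t ≠ 0` a left integral in `H` (`h·t = ε(h)·t`), and `Λ : H → k` a linear functional
with `Λ(t₁)·t₂ = 1`.  Then `Λ` is a right integral for `H` in `H⁎`:
`Λ(h₁)·h₂ = Λ(h)·1` for all `h`. -/
theorem statement0 [FiniteDimensional k H]
    (t : H) (ht0 : t ≠ 0)
    (htl : ∀ h : H, h * t = Coalgebra.counit (R := k) h • t)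
    (Λ : H →ₗ[k] k) (hΛ : swl Λ t = 1) :
    ∀ h : H, swl Λ h = Λ h • (1 : H) := by
  classical
  have hsurj : Function.Surjective (Stmt0Aux.Phi t) := fun h =>
    ⟨Λ ∘ₗ LinearMap.mulLeft k ((Stmt0Aux.Sa : H →ₗ[k] H) h), Stmt0Aux.surj_pt t Λ htl hΛ h⟩
  have hinj : Function.Injective (Stmt0Aux.Phi t) :=
    (LinearMap.injective_iff_surjective_of_finrank_eq_finrank
      Subspace.dual_finrank_eq).mpr hsurj
  have hconv : ∀ f : Module.Dual k H, f ∘ₗ swl Λ = f 1 • Λ := by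
    intro f
    apply hinj
    show swl (f ∘ₗ swl Λ) t = swl ((f 1) • Λ) t
    have h1 : swl (f ∘ₗ swl Λ) t = f 1 • (1 : H) := by
      show TensorProduct.lid k H ((f ∘ₗ swl Λ).rTensor H (Coalgebra.comul t)) = _
      rw [LinearMap.rTensor_comp]
      show TensorProduct.lid k H (f.rTensor H ((swl Λ).rTensor H (Coalgebra.comul t))) = _
      rw [Stmt0Aux.swl_rT_comul t Λ hΛ]
      simp
    have h2 : swl ((f 1) • Λ) t = f 1 • (1 : H) := by
      have : swl ((f 1) • Λ) t = f 1 • swl Λ t := by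
        show TensorProduct.lid k H (((f 1) • Λ).rTensor H (Coalgebra.comul t)) = _
        rw [LinearMap.rTensor_smul]
        simp
        rfl
      rw [this, hΛ]
    rw [h1, h2]
  intro h
  have hpt : ∀ f : Module.Dual k H, f (swl Λ h - Λ h • (1 : H)) = 0 := by
    intro f
    have e := LinearMap.congr_fun (hconv f) h
    simp only [LinearMap.comp_apply, LinearMap.smul_apply, smul_eq_mul] at e
    simp [map_sub, map_smul, e, smul_eq_mul, mul_comm]
  have hz := (Module.forall_dual_apply_eq_zero_iff k (swl Λ h - Λ h • (1 : H))).mp hpt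
  exact sub_eq_zero.mp hz
end

section
/- Let H be a finite-dimensional Hopf algebra over a field k with bijective antipode S. Let t ∈ H be a nonzero left integral, let α : H → k be an algebra homomorphism satisfying t·h = α(h)·t for all h ∈ H, and let Λ : H → k be a linear functional with Λ(t₁)·t₂ = 1. If h ∈ H and h⁎ : H → k satisfy h = h⁎(t₁)·t₂, then for all x ∈ H one has h⁎(x) = Λ(S(h)·x), and also h⁎(x) = α(h₂)·Λ(x·S⁻¹(h₁)). -/
/-!
Since `t` is a left integral, `t₁ ⊗ a t₂ = S(a) t₁ ⊗ t₂`; slicing with `Λ` gives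
`Λ(S(a) t₁) t₂ = a`, so `f ↦ f(t₁) t₂` maps `H*` onto `H`, hence bijectively as
`dim H* = dim H`. Both formulas then follow by checking that the functional on the right is sent
to `h`. For the second, `t g = α(g) t` gives `t₁ g ⊗ t₂ = t₁ ⊗ t₂ S(α(g₁) g₂)`, so `x ↦ Λ(x g)`
is sent to `S(α(g₁) g₂)`; for `g = S⁻¹(α(h₂) h₁)` this equals `α(S⁻¹(h₂)) α(h₃) h₁ = h`, because
`S⁻¹` is an anti-coalgebra map and `α ∘ S⁻¹` is the convolution inverse of `α`.
-/

open TensorProduct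

variable {k H : Type*} [Field k] [Ring H] [HopfAlgebra k H]

namespace Coalgebra

variable {R A ι : Type*} [CommSemiring R] [AddCommMonoid A] [Module R A] [Coalgebra R A] {a : A}

lemma sum_counit_right_smul (r : Repr R a ι) :
    ∑ i ∈ r.index, counit (R := R) (r.right i) • r.left i = a := by
  simpa only [map_sum, _root_.TensorProduct.rid_tmul, one_smul] using
    congr(_root_.TensorProduct.rid R A $(sum_tmul_counit_eq r))

end Coalgebra

namespace HopfAlgebra

open Coalgebra

variable {R A ι : Type*} [CommSemiring R] [Semiring A] [HopfAlgebra R A]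

lemma sum_antipode_tmul_one_mul_comul {a : A} (r : Repr R a ι) :
    ∑ i ∈ r.index, (antipode R (r.left i) ⊗ₜ[R] (1 : A)) * comul (r.right i) = 1 ⊗ₜ a := by
  let Φ : A ⊗[R] (A ⊗[R] A) →ₗ[R] A ⊗[R] A :=
    (LinearMap.mul' R A ∘ₗ (antipode R).rTensor A).rTensor A ∘ₗ
      (TensorProduct.assoc R A A A).symm.toLinearMap
  have := congr(Φ $(sum_tmul_tmul_eq r (fun i => ℛ R (r.left i)) (fun i => ℛ R (r.right i))))
  simp only [map_sum, Φ, LinearMap.comp_apply, LinearEquiv.coe_coe, assoc_symm_tmul,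
    LinearMap.rTensor_tmul, LinearMap.mul'_apply, ← sum_tmul,
    sum_antipode_mul_eq_algebraMap_counit, Algebra.algebraMap_eq_smul_one, smul_tmul] at this
  simp only [← (ℛ R (r.right _)).eq, Finset.mul_sum, Algebra.TensorProduct.tmul_mul_tmul, one_mul,
    ← this, ← tmul_sum, sum_counit_smul]

lemma sum_comul_mul_one_tmul_antipode {a : A} (r : Repr R a ι) :
    ∑ i ∈ r.index, comul (r.left i) * ((1 : A) ⊗ₜ[R] antipode R (r.right i)) = a ⊗ₜ 1 := by
  let Φ : A ⊗[R] (A ⊗[R] A) →ₗ[R] A ⊗[R] A :=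
    (LinearMap.mul' R A ∘ₗ (antipode R).lTensor A).lTensor A
  have := congr(Φ $(sum_tmul_tmul_eq r (fun i => ℛ R (r.left i)) (fun i => ℛ R (r.right i))))
  simp only [map_sum, Φ, LinearMap.lTensor_tmul, LinearMap.comp_apply, LinearMap.mul'_apply,
    ← tmul_sum, sum_mul_antipode_eq_algebraMap_counit, Algebra.algebraMap_eq_smul_one,
    tmul_smul] at this
  simp only [← (ℛ R (r.left _)).eq, Finset.sum_mul, Algebra.TensorProduct.tmul_mul_tmul, mul_one,
    this, smul_tmul', ← sum_tmul, sum_counit_right_smul]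

lemma comul_antipode (a : A) :
    comul (antipode R a) =
      TensorProduct.map (antipode R) (antipode R) (TensorProduct.comm R A A (comul a)) := by
  let G : WithConv (A →ₗ[R] A ⊗[R] A) := WithConv.toConv
    (TensorProduct.map (antipode R) (antipode R) ∘ₗ (TensorProduct.comm R A A).toLinearMap ∘ₗ
      comul)
  have hG : G * WithConv.toConv comul = 1 := by
    ext x
    let r := ℛ R x
    let Φ : A ⊗[R] (A ⊗[R] A) →ₗ[R] A ⊗[R] A := LinearMap.mul' R (A ⊗[R] A) ∘ₗ
      TensorProduct.map (TensorProduct.map (antipode R) (antipode R) ∘ₗ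
        (TensorProduct.comm R A A).toLinearMap) comul ∘ₗ
      (TensorProduct.assoc R A A A).symm.toLinearMap
    have := congr(Φ $(sum_tmul_tmul_eq r (fun i => ℛ R (r.left i)) (fun i => ℛ R (r.right i))))
    simp only [map_sum, Φ, LinearMap.comp_apply, LinearEquiv.coe_coe, assoc_symm_tmul, map_tmul,
      comm_tmul, LinearMap.mul'_apply] at this
    rw [r.convMul_apply]
    simp only [G, LinearMap.comp_apply, LinearEquiv.coe_coe, ← (ℛ R (r.left _)).eq, map_sum,
      comm_tmul, map_tmul, Finset.sum_mul, this]
    trans ∑ i ∈ r.index, ((1 : A) ⊗ₜ antipode R (r.left i)) *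
      ∑ m ∈ (ℛ R (r.right i)).index,
        (antipode R ((ℛ R (r.right i)).left m) ⊗ₜ 1) * comul ((ℛ R (r.right i)).right m)
    · simp only [Finset.mul_sum, ← mul_assoc, Algebra.TensorProduct.tmul_mul_tmul, one_mul,
        mul_one]
    simp only [sum_antipode_tmul_one_mul_comul, Algebra.TensorProduct.tmul_mul_tmul, mul_one,
      ← tmul_sum, sum_antipode_mul_eq_algebraMap_counit]
    simp [Algebra.algebraMap_eq_smul_one, Algebra.TensorProduct.one_def]
  -- `Δ ∘ S` is a right convolution inverse of `Δ`, and `G` a left one.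
  exact congr($(left_inv_eq_right_inv hG LinearMap.comul_right_inv) a).symm

section Inverse

variable (S' : A →ₗ[R] A)

lemma antipode_inv_one (hS'l : ∀ x, S' (antipode R x) = x) : S' 1 = 1 := by
  simpa using hS'l 1

lemma antipode_inv_mul (hS'l : ∀ x, S' (antipode R x) = x)
    (hS'r : ∀ x, antipode R (S' x) = x) (a b : A) : S' (a * b) = S' b * S' a := by
  conv_lhs => rw [← hS'r a, ← hS'r b, ← antipode_mul_antidistrib, hS'l]

lemma comul_antipode_inv (hS'l : ∀ x, S' (antipode R x) = x)
    (hS'r : ∀ x, antipode R (S' x) = x) (a : A) :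
    comul (S' a) = TensorProduct.map S' S' (TensorProduct.comm R A A (comul a)) := by
  conv_rhs => rw [← hS'r a, comul_antipode]
  generalize comul (R := R) (S' a) = X
  induction X using TensorProduct.induction_on with
  | zero => simp
  | tmul u v => simp [hS'l]
  | add X Y hX hY => rw [map_add, map_add, map_add, map_add, ← hX, ← hY]

lemma sum_right_mul_antipode_inv (hS'l : ∀ x, S' (antipode R x) = x)
    (hS'r : ∀ x, antipode R (S' x) = x) {a : A} (r : Repr R a ι) :
    ∑ i ∈ r.index, r.right i * S' (r.left i) = counit (R := R) a • 1 := by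
  calc ∑ i ∈ r.index, r.right i * S' (r.left i)
      = S' (∑ i ∈ r.index, r.left i * antipode R (r.right i)) := by
        simp only [map_sum, antipode_inv_mul S' hS'l hS'r, hS'l]
    _ = counit (R := R) a • 1 := by
        rw [sum_mul_antipode_eq_smul, map_smul, antipode_inv_one S' hS'l]

end Inverse

end HopfAlgebra

section Slice

variable {R A : Type*} [CommSemiring R] [Semiring A] [Algebra R A] (f : A →ₗ[R] R)

noncomputable def slice : A ⊗[R] A →ₗ[R] A :=
  (TensorProduct.lid R A).toLinearMap ∘ₗ f.rTensor A

@[simp] lemma slice_tmul (x y : A) : slice f (x ⊗ₜ y) = f x • y := by simp [slice]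

lemma slice_one_tmul_mul (y : A) (X : A ⊗[R] A) :
    slice f (((1 : A) ⊗ₜ y) * X) = y * slice f X := by
  induction X using TensorProduct.induction_on with
  | zero => simp
  | tmul u v => simp
  | add X Y hX hY => simp [mul_add, hX, hY]

lemma slice_mul_one_tmul (y : A) (X : A ⊗[R] A) :
    slice f (X * ((1 : A) ⊗ₜ y)) = slice f X * y := by
  induction X using TensorProduct.induction_on with
  | zero => simp
  | tmul u v => simp
  | add X Y hX hY => simp [add_mul, hX, hY]

lemma slice_tmul_one_mul (x : A) (X : A ⊗[R] A) :
    slice f ((x ⊗ₜ (1 : A)) * X) = slice (f ∘ₗ LinearMap.mulLeft R x) X := by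
  induction X using TensorProduct.induction_on with
  | zero => simp
  | tmul u v => simp
  | add X Y hX hY => simp [mul_add, hX, hY]

lemma slice_mul_tmul_one (x : A) (X : A ⊗[R] A) :
    slice f (X * (x ⊗ₜ (1 : A))) = slice (f ∘ₗ LinearMap.mulRight R x) X := by
  induction X using TensorProduct.induction_on with
  | zero => simp
  | tmul u v => simp
  | add X Y hX hY => simp [add_mul, hX, hY]

end Slice

namespace HopfAlgebra

open Coalgebra

variable {R A : Type*} [CommSemiring R] [Semiring A] [HopfAlgebra R A] {t : A}

lemma one_tmul_mul_comul_of_mul_eq_counit_smul (ht : ∀ b : A, b * t = counit (R := R) b • t)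
    (a : A) : ((1 : A) ⊗ₜ[R] a) * comul t = (antipode R a ⊗ₜ 1) * comul t := by
  let r := ℛ R a
  calc ((1 : A) ⊗ₜ[R] a) * comul t
      = ∑ i ∈ r.index, (antipode R (r.left i) ⊗ₜ[R] (1 : A)) * comul (r.right i * t) := by
        simp only [← sum_antipode_tmul_one_mul_comul r, Finset.sum_mul, mul_assoc,
          Bialgebra.comul_mul]
    _ = ∑ i ∈ r.index, (antipode R (counit (R := R) (r.right i) • r.left i) ⊗ₜ[R] (1 : A)) *
          comul t := by
        refine Finset.sum_congr rfl fun i _ => ?_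
        rw [ht, map_smul, mul_smul_comm, map_smul, ← smul_tmul', smul_mul_assoc]
    _ = (antipode R a ⊗ₜ 1) * comul t := by
        rw [← Finset.sum_mul, ← sum_tmul, ← map_sum, sum_counit_right_smul]

lemma comul_mul_tmul_one_of_mul_eq_smul {α : A →ₗ[R] R} (ht : ∀ b : A, t * b = α b • t)
    (g : A) :
    comul t * (g ⊗ₜ[R] (1 : A)) = comul t * ((1 : A) ⊗ₜ antipode R (slice α (comul g))) := by
  let r := ℛ R g
  calc comul t * (g ⊗ₜ[R] (1 : A))
      = ∑ i ∈ r.index, comul (t * r.left i) * ((1 : A) ⊗ₜ[R] antipode R (r.right i)) := by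
        simp only [← sum_comul_mul_one_tmul_antipode r, Finset.mul_sum, ← mul_assoc,
          Bialgebra.comul_mul]
    _ = ∑ i ∈ r.index, comul t * ((1 : A) ⊗ₜ[R] antipode R (α (r.left i) • r.right i)) := by
        refine Finset.sum_congr rfl fun i _ => ?_
        rw [ht, map_smul, smul_mul_assoc, map_smul, tmul_smul, mul_smul_comm]
    _ = comul t * ((1 : A) ⊗ₜ antipode R (slice α (comul g))) := by
        rw [← Finset.mul_sum, ← tmul_sum, ← map_sum, ← r.eq, map_sum]
        simp

end HopfAlgebra

section Sweedler

open Coalgebra HopfAlgebra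
variable {ι : Type*}

lemma swl_eq_slice (f : H →ₗ[k] k) (x : H) : swl f x = slice f (comul x) := rfl

lemma swr_eq_sum (f : H →ₗ[k] k) {x : H} (r : Repr k x ι) :
    swr f x = ∑ i ∈ r.index, f (r.right i) • r.left i := by
  simp [swr, ← r.eq]

lemma sw2k_eq_sum (f g : H →ₗ[k] k) {x : H} (r : Repr k x ι) :
    sw2k f g x = ∑ i ∈ r.index, f (r.left i) * g (r.right i) := by
  simp [sw2k, ← r.eq]

lemma swr_swr (f g : H →ₗ[k] k) (x : H) : swr f (swr g x) = swr (sw2k f g) x := by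
  let r := ℛ k x
  let Φ : H ⊗[k] (H ⊗[k] H) →ₗ[k] H :=
    (TensorProduct.rid k H).toLinearMap ∘ₗ (LinearMap.mul' k k ∘ₗ TensorProduct.map f g).lTensor H
  have := congr(Φ $(sum_tmul_tmul_eq r (fun i => ℛ k (r.left i)) (fun i => ℛ k (r.right i))))
  simp only [Φ, map_sum, LinearMap.comp_apply, LinearMap.lTensor_tmul, TensorProduct.map_tmul,
    LinearMap.mul'_apply, LinearEquiv.coe_coe, TensorProduct.rid_tmul] at this
  simp only [swr_eq_sum _ r, map_sum, map_smul, swr_eq_sum _ (ℛ k (r.left _)),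
    sw2k_eq_sum _ _ (ℛ k (r.right _)), Finset.smul_sum, Finset.sum_smul, smul_smul,
    mul_comm (g _), ← this]

lemma swl_comp_mulLeft_antipode {t : H} (ht : ∀ b : H, b * t = counit (R := k) b • t)
    {Λ : H →ₗ[k] k} (hΛ : swl Λ t = 1) (a : H) :
    swl (Λ ∘ₗ LinearMap.mulLeft k (antipode k a)) t = a := by
  rw [swl_eq_slice, ← slice_tmul_one_mul, ← one_tmul_mul_comul_of_mul_eq_counit_smul ht,
    slice_one_tmul_mul, ← swl_eq_slice, hΛ, mul_one]

lemma swl_comp_mulRight {t : H} {α : H →ₗ[k] k} (ht : ∀ b : H, t * b = α b • t)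
    {Λ : H →ₗ[k] k} (hΛ : swl Λ t = 1) (g : H) :
    swl (Λ ∘ₗ LinearMap.mulRight k g) t = antipode k (swl α g) := by
  rw [swl_eq_slice, ← slice_mul_tmul_one, comul_mul_tmul_one_of_mul_eq_smul ht,
    slice_mul_one_tmul, ← swl_eq_slice, hΛ, one_mul, swl_eq_slice]

lemma swr_counit (x : H) : swr (counit (R := k)) x = x := by
  simp [swr]

variable (S' : H →ₗ[k] H)

lemma antipode_swl_antipode_inv (hS'l : ∀ x, S' (antipode k x) = x)
    (hS'r : ∀ x, antipode k (S' x) = x) (f : H →ₗ[k] k) (x : H) :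
    antipode k (swl f (S' x)) = swr (f ∘ₗ S') x := by
  rw [swl_eq_slice, comul_antipode_inv S' hS'l hS'r, swr_eq_sum _ (ℛ k x), ← (ℛ k x).eq]
  simp [hS'r]

lemma sw2k_comp_antipode_inv (hS'l : ∀ x, S' (antipode k x) = x)
    (hS'r : ∀ x, antipode k (S' x) = x) (α : H →ₐ[k] k) :
    sw2k (α.toLinearMap ∘ₗ S') α.toLinearMap = counit := by
  ext x
  let r := ℛ k x
  calc sw2k (α.toLinearMap ∘ₗ S') α.toLinearMap x
      = α (∑ i ∈ r.index, r.right i * S' (r.left i)) := by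
        simp [sw2k_eq_sum _ _ r, map_sum, mul_comm]
    _ = counit x := by
        rw [sum_right_mul_antipode_inv S' hS'l hS'r, map_smul, map_one, smul_eq_mul, mul_one]

lemma sw2k_mulLeft_comp_antipode_inv (Λ α : H →ₗ[k] k) (x h : H) :
    sw2k (Λ ∘ₗ LinearMap.mulLeft k x ∘ₗ S') α h = Λ (x * S' (swr α h)) := by
  simp [sw2k_eq_sum _ _ (ℛ k h), swr_eq_sum _ (ℛ k h), map_sum, Finset.mul_sum, mul_comm]

end Sweedler

lemma injective_swl_of_surjective [FiniteDimensional k H] {t : H}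
    (hsurj : ∀ a : H, ∃ f : H →ₗ[k] k, swl f t = a) :
    Function.Injective fun f : H →ₗ[k] k => swl f t := by
  let L : (H →ₗ[k] k) →ₗ[k] H :=
    (TensorProduct.lid k H).toLinearMap ∘ₗ LinearMap.applyₗ (Coalgebra.comul t) ∘ₗ
      LinearMap.rTensorHom H
  exact (LinearMap.injective_iff_surjective_of_finrank_eq_finrank
    (Subspace.dual_finrank_eq (K := k) (V := H)) (f := L)).2 hsurj

theorem statement1_general [FiniteDimensional k H]
    (S' : H →ₗ[k] H)
    (hS'l : ∀ x : H, S' (HopfAlgebra.antipode (R := k) x) = x)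
    (hS'r : ∀ x : H, HopfAlgebra.antipode (R := k) (S' x) = x)
    (t : H)
    (htl : ∀ h : H, h * t = Coalgebra.counit (R := k) h • t)
    (α : H →ₐ[k] k) (hα : ∀ h : H, t * h = α h • t)
    (Λ : H →ₗ[k] k) (hΛ : swl Λ t = 1)
    (h : H) (hstar : H →ₗ[k] k) (hh : swl hstar t = h) :
    (∀ x : H, hstar x = Λ (HopfAlgebra.antipode (R := k) h * x)) ∧
    (∀ x : H,
      hstar x = sw2k (Λ ∘ₗ (LinearMap.mulLeft k x) ∘ₗ S') α.toLinearMap h) := by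
  have hsurj := swl_comp_mulLeft_antipode htl hΛ
  have hinj := injective_swl_of_surjective fun a => ⟨_, hsurj a⟩
  have hstar_left : hstar = Λ ∘ₗ LinearMap.mulLeft k (HopfAlgebra.antipode k h) :=
    hinj (by simp only [hh, hsurj])
  have hstar_right : hstar = Λ ∘ₗ LinearMap.mulRight k (S' (swr α.toLinearMap h)) := hinj <| by
    simp only [hh, swl_comp_mulRight (α := α.toLinearMap) hα hΛ,
      antipode_swl_antipode_inv S' hS'l hS'r, swr_swr, sw2k_comp_antipode_inv S' hS'l hS'r,
      swr_counit]
  exact ⟨fun x => by rw [hstar_left]; rfl,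
    fun x => by rw [hstar_right, sw2k_mulLeft_comp_antipode_inv]; rfl⟩

/-- `H` finite-dimensional Hopf algebra over `k` with bijective antipode
`S` (with linear inverse `S'`), `t ≠ 0` a left integral, `α : H → k` an algebra map with
`t·h = α(h)·t`, `Λ : H → k` with `Λ(t₁)·t₂ = 1`.  If `h = h⁎(t₁)·t₂`, then for all `x`,
`h⁎(x) = Λ(S(h)·x)` and `h⁎(x) = α(h₂)·Λ(x·S⁻¹(h₁))`. -/
theorem statement1 [FiniteDimensional k H]
    (S' : H →ₗ[k] H)
    (hS'l : ∀ x : H, S' (HopfAlgebra.antipode (R := k) x) = x)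
    (hS'r : ∀ x : H, HopfAlgebra.antipode (R := k) (S' x) = x)
    (t : H) (ht0 : t ≠ 0)
    (htl : ∀ h : H, h * t = Coalgebra.counit (R := k) h • t)
    (α : H →ₐ[k] k) (hα : ∀ h : H, t * h = α h • t)
    (Λ : H →ₗ[k] k) (hΛ : swl Λ t = 1)
    (h : H) (hstar : H →ₗ[k] k) (hh : swl hstar t = h) :
    (∀ x : H, hstar x = Λ (HopfAlgebra.antipode (R := k) h * x)) ∧
    (∀ x : H,
      hstar x = sw2k (Λ ∘ₗ (LinearMap.mulLeft k x) ∘ₗ S') α.toLinearMap h) :=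
  statement1_general S' hS'l hS'r t htl α hα Λ hΛ h hstar hh
end

section
/- Let H be a Hopf algebra over a field k with bijective antipode S, and let λ : H → k be a nonzero left integral for H in H⁎. Assume the map H → H⁎, h ↦ λ ↼ h, is injective. Let χ : H → H be a bijective algebra homomorphism satisfying λ(x·h) = λ(χ(h)·x) for all x, h ∈ H, set α := ε ∘ χ, and let g ∈ H be a grouplike element satisfying λ(h₁)·h₂ = λ(h)·S(g) for all h ∈ H. Then for every h ∈ H, χ(h) = α(h₁)·g⁻¹·S²(h₂)·g = α(h₁)·S(g)·S²(h₂)·g. -/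
/-!
Helper definitions for Sweedler-notation expressions in a Hopf algebra `H` over a field `k`.
-/

open TensorProduct

variable {k H : Type*} [Field k] [Ring H] [HopfAlgebra k H]

/-!
The integral identity `λ(h₁)·h₂ = λ(h)·S(g)`, applied to a product `a b`, says that in the
convolution algebra of linear endomorphisms of `H` the map `L_a : b ↦ λ(a₁ b)·a₂` satisfies
`L_a ⋆ id = (b ↦ λ(a b)·S(g))`; convolving with the antipode gives
`λ(a₁ b)·a₂ = λ(a b₁)·S(g)·S(b₂)`. Using this twice together with `λ(x h) = λ(χ(h) x)`,
the tensors `Δ(χ h)` and `(χ ⊗ T)(Δ h)`, where `T y = S(g)·S²(y)·g`, have the same image under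
`λ(-·x) ⊗ id` for every `x`. Injectivity of `h ↦ λ ↼ h` makes these functionals separate points,
so the two tensors agree, and `ε ⊗ id` turns this into the formula for `χ h`.
-/

open Coalgebra HopfAlgebra LinearMap WithConv

theorem TensorProduct.eq_of_forall_rTensor_eq {R V W ι : Type*} [CommRing R] [AddCommGroup V]
    [Module R V] [AddCommGroup W] [Module R W] [Module.Free R W] (f : ι → V →ₗ[R] R)
    (hf : ∀ v, (∀ i, f i v = 0) → v = 0) {s t : V ⊗[R] W}
    (h : ∀ i, (f i).rTensor W s = (f i).rTensor W t) : s = t := by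
  classical
  let e : V ⊗[R] W ≃ₗ[R] _ →₀ V := equivFinsuppOfBasisRight (Module.Free.chooseBasis R W)
  rw [← sub_eq_zero, ← LinearEquiv.map_eq_zero_iff e]
  ext j
  refine hf _ fun i => ?_
  have hcomm : ∀ u : V ⊗[R] W,
      f i (e u j) = equivFinsuppOfBasisRight (Module.Free.chooseBasis R W) ((f i).rTensor W u) j := by
    intro u
    induction u using TensorProduct.induction_on <;> simp_all [e]
  simp [hcomm, h i]

lemma swl_apply_eq_sum (f : H →ₗ[k] k) {a : H} {ι : Type*} (r : Repr k a ι) :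
    swl f a = ∑ i ∈ r.index, f (r.left i) • r.right i := by
  simp [swl, ← r.eq]

lemma lid_rTensor_map (f : H →ₗ[k] k) (φ ψ : H →ₗ[k] H) (t : H ⊗[k] H) :
    TensorProduct.lid k H (f.rTensor H (map φ ψ t)) =
      ψ (TensorProduct.lid k H ((f ∘ₗ φ).rTensor H t)) := by
  induction t using TensorProduct.induction_on <;> simp_all

lemma swl_comp_mulRight_s11 (lam : H →ₗ[k] k) {g : H}
    (hglam : ∀ h : H, swl lam h = lam h • antipode k g) (a b : H) :
    swl (lam ∘ₗ mulRight k b) a = antipode k g * antipode k (swl (lam ∘ₗ mulLeft k a) b) := by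
  let L : H →ₗ[k] H := ∑ i ∈ (ℛ k a).index,
    (lam ∘ₗ mulLeft k ((ℛ k a).left i)).smulRight ((ℛ k a).right i)
  have hL : ∀ c, L c = swl (lam ∘ₗ mulRight k c) a := fun c => by
    simp [L, swl_apply_eq_sum _ (ℛ k a)]
  have hL_mul_id : toConv L * toConv (LinearMap.id : H →ₗ[k] H) =
      toConv ((lam ∘ₗ mulLeft k a).smulRight (antipode k g)) := by
    ext c
    rw [(ℛ k c).convMul_apply]
    simp only [hL, swl_apply_eq_sum _ (ℛ k a), coe_comp, Function.comp_apply, mulRight_apply,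
      id_coe, id_eq, Finset.sum_mul, Algebra.smul_mul_assoc, coe_smulRight, mulLeft_apply]
    rw [← hglam, swl_apply_eq_sum _ ((ℛ k a).mul (ℛ k c)), Finset.sum_comm]
    simp [Finset.sum_product]
  have hL_eq : toConv L =
      toConv ((lam ∘ₗ mulLeft k a).smulRight (antipode k g)) * toConv (antipode k) := by
    rw [← hL_mul_id, mul_assoc, id_mul_antipode, mul_one]
  rw [← hL b, congr($hL_eq b), (ℛ k b).convMul_apply, swl_apply_eq_sum _ (ℛ k b)]
  simp [Finset.mul_sum]

lemma comul_apply_eq_map_comul (lam : H →ₗ[k] k)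
    (hinj : Function.Injective (fun h : H => lam ∘ₗ LinearMap.mulLeft k h))
    (χ : H →ₐ[k] H) (hχ : ∀ x h : H, lam (x * h) = lam (χ h * x))
    {g : H} (hg : IsGroupLikeElem k g)
    (hglam : ∀ h : H, swl lam h = lam h • antipode k g) (h : H) :
    comul (R := k) (χ h) = map χ.toLinearMap
      (mulLeft k (antipode k g) ∘ₗ mulRight k g ∘ₗ antipode k ∘ₗ antipode k) (comul h) := by
  have hsep : ∀ c : H, (∀ x, lam (c * x) = 0) → c = 0 := fun c hc =>
    hinj (a₂ := 0) (LinearMap.ext fun x => by simpa using hc x)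
  refine TensorProduct.eq_of_forall_rTensor_eq (fun x => lam ∘ₗ mulRight k x) hsep fun x => ?_
  apply (TensorProduct.lid k H).injective
  have hχ_left : lam ∘ₗ mulLeft k (χ h) = lam ∘ₗ mulRight k h :=
    LinearMap.ext fun y => (hχ y h).symm
  have hχ_right : lam ∘ₗ mulRight k x ∘ₗ χ.toLinearMap = lam ∘ₗ mulLeft k x :=
    LinearMap.ext fun y => (hχ x y).symm
  calc TensorProduct.lid k H ((lam ∘ₗ mulRight k x).rTensor H (comul (χ h)))
      = swl (lam ∘ₗ mulRight k x) (χ h) := rfl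
    _ = antipode k g * antipode k (swl (lam ∘ₗ mulRight k h) x) := by
      rw [swl_comp_mulRight_s11 lam hglam, hχ_left]
    _ = antipode k g * (antipode k (antipode k (swl (lam ∘ₗ mulLeft k x) h)) * g) := by
      rw [swl_comp_mulRight_s11 lam hglam, antipode_mul_antidistrib, hg.antipode_antipode]
    _ = _ := by
      rw [lid_rTensor_map, LinearMap.comp_assoc, hχ_right]
      rfl

theorem statement11_general
    (lam : H →ₗ[k] k)
    (hinj : Function.Injective (fun h : H => lam ∘ₗ LinearMap.mulLeft k h))
    (χ : H →ₐ[k] H)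
    (hχ : ∀ x h : H, lam (x * h) = lam (χ h * x))
    (g : H) (hg : Coalgebra.comul (R := k) g = g ⊗ₜ[k] g)
    (hgε : Coalgebra.counit (R := k) g = 1)
    (hglam : ∀ h : H, swl lam h = lam h • HopfAlgebra.antipode (R := k) g) :
    ∀ h : H,
      χ h =
        sw2 ((Algebra.linearMap k H) ∘ₗ (Coalgebra.counit (R := k) ∘ₗ χ.toLinearMap))
          ((LinearMap.mulLeft k (HopfAlgebra.antipode (R := k) g)) ∘ₗ
            (LinearMap.mulRight k g) ∘ₗ
            (HopfAlgebra.antipode (R := k)) ∘ₗ (HopfAlgebra.antipode (R := k))) h := by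
  intro h
  have hcounit := congr(mul' k H (map (Algebra.linearMap k H ∘ₗ counit) LinearMap.id
    $(comul_apply_eq_map_comul lam hinj χ hχ ⟨hgε, hg⟩ hglam h)))
  rw [map_map, LinearMap.id_comp] at hcounit
  -- the counit law `1 ⋆ id = id` in the convolution algebra; unfolded, its left side is that of
  -- `hcounit`
  calc χ h = (1 * toConv (LinearMap.id : H →ₗ[k] H)) (χ h) := by rw [one_mul]; rfl
    _ = _ := hcounit

/-- Same setting as the co-Frobenius `S⁴` formula: `λ ≠ 0` a left
integral for `H` in `H⁎` with `h ↦ λ ↼ h` injective, `χ` a bijective algebra endomorphism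
with `λ(x·h) = λ(χ(h)·x)`, `α := ε ∘ χ`, and `g` grouplike with `λ(h₁)·h₂ = λ(h)·S(g)`.
Then `χ(h) = α(h₁)·S(g)·S²(h₂)·g` (i.e. `χ(h) = α(h₁)·g⁻¹·S²(h₂)·g`) for all `h`. -/
theorem statement11
    (hS : Function.Bijective ⇑(HopfAlgebra.antipode (R := k) (A := H)))
    (lam : H →ₗ[k] k) (hlam0 : lam ≠ 0)
    (hlaml : ∀ h : H, swr lam h = lam h • (1 : H))
    (hinj : Function.Injective (fun h : H => lam ∘ₗ LinearMap.mulLeft k h))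
    (χ : H →ₐ[k] H) (hχbij : Function.Bijective ⇑χ)
    (hχ : ∀ x h : H, lam (x * h) = lam (χ h * x))
    (g : H) (hg : Coalgebra.comul (R := k) g = g ⊗ₜ[k] g)
    (hgε : Coalgebra.counit (R := k) g = 1)
    (hglam : ∀ h : H, swl lam h = lam h • HopfAlgebra.antipode (R := k) g) :
    ∀ h : H,
      χ h =
        sw2 ((Algebra.linearMap k H) ∘ₗ (Coalgebra.counit (R := k) ∘ₗ χ.toLinearMap))
          ((LinearMap.mulLeft k (HopfAlgebra.antipode (R := k) g)) ∘ₗ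
            (LinearMap.mulRight k g) ∘ₗ
            (HopfAlgebra.antipode (R := k)) ∘ₗ (HopfAlgebra.antipode (R := k))) h :=
  statement11_general lam hinj χ hχ g hg hgε hglam
end

section
/- Let H be a Hopf algebra over a field k with bijective antipode S, and let λ : H → k be a nonzero linear functional that is simultaneously a left integral (h₁·λ(h₂) = λ(h)·1 for all h) and a right integral (λ(h₁)·h₂ = λ(h)·1 for all h) for H in H⁎, and satisfies λ ∘ S = λ. Assume the map H → H⁎, h ↦ λ ↼ h, is injective. Then S² = id_H if and only if the bilinear form B(x, y) := λ(x·S(y)) is symmetric, i.e. λ(x·S(y)) = λ(y·S(x)) for all x, y ∈ H. -/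
/-!
Helper definitions for Sweedler-notation expressions in a Hopf algebra `H` over a field `k`.
-/

open TensorProduct

variable {k H : Type*} [Field k] [Ring H] [HopfAlgebra k H]

theorem map_mul_antipode_eq_of_comp_antipode_eq {R A : Type*} [CommSemiring R] [Semiring A]
    [HopfAlgebra R A] {f : A →ₗ[R] R} (hf : f ∘ₗ HopfAlgebra.antipode R = f) (x y : A) :
    f (x * HopfAlgebra.antipode R y) =
      f (HopfAlgebra.antipode R (HopfAlgebra.antipode R y) * HopfAlgebra.antipode R x) := by
  rw [← HopfAlgebra.antipode_mul_antidistrib, ← LinearMap.comp_apply, hf]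

theorem statement13_general
    (hS : Function.Bijective ⇑(HopfAlgebra.antipode (R := k) (A := H)))
    (lam : H →ₗ[k] k)
    (hlamS : lam ∘ₗ HopfAlgebra.antipode (R := k) = lam)
    (hinj : Function.Injective (fun h : H => lam ∘ₗ LinearMap.mulLeft k h)) :
    (∀ h : H, HopfAlgebra.antipode (R := k) (HopfAlgebra.antipode (R := k) h) = h) ↔
      (∀ x y : H,
        lam (x * HopfAlgebra.antipode (R := k) y) =
          lam (y * HopfAlgebra.antipode (R := k) x)) := by
  constructor
  · intro hSS x y
    rw [map_mul_antipode_eq_of_comp_antipode_eq hlamS, hSS]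
  · intro hsym y
    -- `λ ↼ S²y` and `λ ↼ y` agree on every `S z`, hence everywhere since `S` is surjective.
    refine hinj (LinearMap.ext fun x => ?_)
    obtain ⟨z, rfl⟩ := hS.2 x
    change lam (_ * _) = lam (y * _)
    rw [← map_mul_antipode_eq_of_comp_antipode_eq hlamS, hsym]

/-- `H` Hopf algebra over `k` with bijective antipode, `λ ≠ 0` a
two-sided integral for `H` in `H⁎` with `λ ∘ S = λ` and `h ↦ λ ↼ h` injective.
Then `S² = id` iff the bilinear form `B(x,y) = λ(x·S(y))` is symmetric. -/
theorem statement13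
    (hS : Function.Bijective ⇑(HopfAlgebra.antipode (R := k) (A := H)))
    (lam : H →ₗ[k] k) (hlam0 : lam ≠ 0)
    (hlaml : ∀ h : H, swr lam h = lam h • (1 : H))
    (hlamr : ∀ h : H, swl lam h = lam h • (1 : H))
    (hlamS : lam ∘ₗ HopfAlgebra.antipode (R := k) = lam)
    (hinj : Function.Injective (fun h : H => lam ∘ₗ LinearMap.mulLeft k h)) :
    (∀ h : H, HopfAlgebra.antipode (R := k) (HopfAlgebra.antipode (R := k) h) = h) ↔
      (∀ x y : H,
        lam (x * HopfAlgebra.antipode (R := k) y) =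
          lam (y * HopfAlgebra.antipode (R := k) x)) :=
  statement13_general hS lam hlamS hinj
end
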